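/- arXiv:2006.16346 — 4 statements merged into one kernel-verified Lean document; each statement's English description precedes it below -/
import Mathlib

section
/- Let E be a real inner product space, let X ⊆ E be a nonempty convex set with diameter at most R > 0 (i.e., ‖u - v‖ ≤ R for all u, v ∈ X), let α > 0 and L > 0 with α ≤ 1/L. For each i = 1, …, K let s_i : E → ℝ be a convex differentiable function whose gradient ∇s_i satisfies the descent inequality s_i(v) ≤ s_i(u) + ⟪∇s_i(u), v - u⟫ + (L/2)‖v - u‖² for all u, v ∈ E, let g_i : E → ℝ be convex, and set f_i := s_i + g_i. Let x*_0 ∈ X and, for each i = 1, …, K, let x*_i ∈ X be a minimizer of f_i over X, and set ω_i := ‖x*_i - x*_{i-1}‖. Let x_0 ∈ X and, for each i = 1, …, K, let x_i ∈ X be a minimizer over X of the map z ↦ g_i(z) + (1/(2α))‖z - (x_{i-1} - α∇s_i(x_{i-1}))‖². Then the dynamic regret satisfies ∑_{i=1}^K [f_i(x_i) - f_i(x*_i)] ≤ (1/(2α))‖x_0 - x*_0‖² + (R/α)∑_{i=1}^K ω_i + (1/(2α))∑_{i=1}^K ω_i². -/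
/-!
For every `z ∈ X`, one proximal-gradient step satisfies
`f_i(x_i) - f_i(z) ≤ (‖z - x_{i-1}‖² - ‖z - x_i‖²) / (2α)`: the gradient inequality for `s_i`
at `x_{i-1}`, the descent inequality (with `L ≤ 1/α`) and the three-point inequality of the
proximal minimizer combine into it. With `z = x*_i`, recentring `‖x*_i - x_{i-1}‖²` at `x*_{i-1}`
costs at most `2Rω_i + ω_i²` by the triangle inequality and the diameter bound, and the remaining
differences telescope.
-/

open Set Filter Topology
open scoped RealInnerProductSpace

lemma nonpos_of_forall_le_mul {a b : ℝ} (h : ∀ t ∈ Ioc (0 : ℝ) 1, a ≤ t * b) : a ≤ 0 := by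
  have hlim : Tendsto (fun t : ℝ => t * b) (𝓝[>] 0) (𝓝 0) := by
    simpa using (tendsto_id.mul_const b).mono_left (nhdsWithin_le_nhds (a := (0 : ℝ)))
  exact ge_of_tendsto hlim (eventually_of_mem (Ioc_mem_nhdsGT one_pos) h)

lemma ConvexOn.add_fderiv_sub_le {E : Type*} [NormedAddCommGroup E] [NormedSpace ℝ E]
    {s : E → ℝ} {s' : E →L[ℝ] ℝ} {p : E} (hs : ConvexOn ℝ univ s) (hp : HasFDerivAt s s' p)
    (z : E) : s p + s' (z - p) ≤ s z := by
  have hderiv : HasDerivAt (s ∘ AffineMap.lineMap (k := ℝ) p z) (s' (z - p)) 0 := by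
    refine HasFDerivAt.comp_hasDerivAt (0 : ℝ) ?_ AffineMap.hasDerivAt_lineMap
    simpa using hp
  have hslope := (hs.comp_affineMap (AffineMap.lineMap (k := ℝ) p z)).le_slope_of_hasDerivAt
    (mem_univ 0) (mem_univ 1) one_pos hderiv
  simp only [slope_def_field, Function.comp_apply, AffineMap.lineMap_apply_zero,
    AffineMap.lineMap_apply_one, sub_zero, div_one] at hslope
  linarith

section Prox

variable {E : Type*} [NormedAddCommGroup E] [InnerProductSpace ℝ E]

lemma norm_add_smul_sq (u v : E) (t : ℝ) :
    ‖u + t • v‖ ^ 2 = ‖u‖ ^ 2 + 2 * t * ⟪u, v⟫ + t ^ 2 * ‖v‖ ^ 2 := by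
  rw [norm_add_sq_real, real_inner_smul_right, norm_smul, mul_pow, Real.norm_eq_abs, sq_abs]
  ring

lemma IsMinOn.le_add_two_mul_inner {X : Set E} {g : E → ℝ} (hg : ConvexOn ℝ X g) {c : ℝ}
    {x y z : E} (hmin : IsMinOn (fun w => g w + c * ‖w - y‖ ^ 2) X x) (hx : x ∈ X)
    (hz : z ∈ X) : g x ≤ g z + 2 * c * ⟪x - y, z - x⟫ := by
  -- Compare `x` with `x + t • (z - x)`: the quadratic term contributes only `O(t²)`.
  suffices g x - g z - 2 * c * ⟪x - y, z - x⟫ ≤ 0 by linarith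
  refine nonpos_of_forall_le_mul (b := c * ‖z - x‖ ^ 2) fun t ⟨ht0, ht1⟩ => ?_
  have hseg : (1 - t) • x + t • z = x + t • (z - x) := by module
  have hconv := hg.2 hx hz (sub_nonneg.2 ht1) ht0.le (sub_add_cancel 1 t)
  have hmin_t := hmin (hseg ▸ hg.1 hx hz (sub_nonneg.2 ht1) ht0.le (sub_add_cancel 1 t))
  simp only [smul_eq_mul, hseg] at hconv
  simp only [mem_ofPred_eq] at hmin_t
  rw [show x + t • (z - x) - y = (x - y) + t • (z - x) by abel, norm_add_smul_sq] at hmin_t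
  have key : t * (g x - g z - 2 * c * ⟪x - y, z - x⟫) ≤ t * (t * (c * ‖z - x‖ ^ 2)) := by
    linarith
  exact le_of_mul_le_mul_left key ht0

lemma IsMinOn.add_sq_norm_sub_le {X : Set E} {g : E → ℝ} (hg : ConvexOn ℝ X g) {c : ℝ}
    {x y z : E} (hmin : IsMinOn (fun w => g w + c * ‖w - y‖ ^ 2) X x) (hx : x ∈ X)
    (hz : z ∈ X) : g x + c * ‖x - y‖ ^ 2 + c * ‖z - x‖ ^ 2 ≤ g z + c * ‖z - y‖ ^ 2 := by
  have hvar := hmin.le_add_two_mul_inner hg hx hz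
  have hexp := norm_add_sq_real (x - y) (z - x)
  rw [sub_add_sub_cancel'] at hexp
  linear_combination hvar - c * hexp

lemma proxGrad_step_le {X : Set E} {s g : E → ℝ} (hs : ConvexOn ℝ univ s) (hg : ConvexOn ℝ X g)
    {α L : ℝ} (hα : 0 < α) (hLα : L ≤ 1 / α) {d xp xn z : E}
    (hd : HasFDerivAt s (innerSL ℝ d) xp)
    (hdesc : s xn ≤ s xp + ⟪d, xn - xp⟫ + L / 2 * ‖xn - xp‖ ^ 2)
    (hmin : IsMinOn (fun w => g w + 1 / (2 * α) * ‖w - (xp - α • d)‖ ^ 2) X xn)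
    (hxn : xn ∈ X) (hz : z ∈ X) :
    s xn + g xn - (s z + g z) ≤ 1 / (2 * α) * (‖z - xp‖ ^ 2 - ‖z - xn‖ ^ 2) := by
  have hgrad : s xp + ⟪d, z - xp⟫ ≤ s z := hs.add_fderiv_sub_le hd z
  have hprox := hmin.add_sq_norm_sub_le hg hxn hz
  have hshift : ∀ v, 1 / (2 * α) * ‖v - (xp - α • d)‖ ^ 2 =
      1 / (2 * α) * ‖v - xp‖ ^ 2 + ⟪d, v - xp⟫ + α / 2 * ‖d‖ ^ 2 := by
    intro v
    rw [show v - (xp - α • d) = (v - xp) + α • d by abel, norm_add_smul_sq, real_inner_comm]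
    field_simp
  have hL : L / 2 ≤ 1 / (2 * α) := by
    calc L / 2 ≤ 1 / α / 2 := by linarith
      _ = 1 / (2 * α) := by ring
  rw [hshift, hshift] at hprox
  have hLsq := mul_le_mul_of_nonneg_right hL (sq_nonneg ‖xn - xp‖)
  linarith

end Prox

lemma sq_norm_sub_le_of_norm_sub_le {E : Type*} [SeminormedAddCommGroup E] {a b x : E} {R : ℝ}
    (hR : ‖b - x‖ ≤ R) : ‖a - x‖ ^ 2 ≤ ‖b - x‖ ^ 2 + 2 * R * ‖a - b‖ + ‖a - b‖ ^ 2 := by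
  calc ‖a - x‖ ^ 2 ≤ (‖a - b‖ + ‖b - x‖) ^ 2 := by
        gcongr
        exact norm_sub_le_norm_sub_add_norm_sub a b x
    _ = ‖b - x‖ ^ 2 + 2 * ‖b - x‖ * ‖a - b‖ + ‖a - b‖ ^ 2 := by ring
    _ ≤ ‖b - x‖ ^ 2 + 2 * R * ‖a - b‖ + ‖a - b‖ ^ 2 := by gcongr

lemma Finset.sum_Icc_one_sub_pred {M : Type*} [AddCommGroup M] (u : ℕ → M) (n : ℕ) :
    ∑ i ∈ Icc 1 n, (u (i - 1) - u i) = u 0 - u n := by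
  induction n with
  | zero => simp
  | succ n ih =>
    rw [sum_Icc_succ_top (Nat.le_add_left 1 n), ih, Nat.add_sub_cancel]
    abel

lemma forall_Icc_pred {p : ℕ → Prop} {K : ℕ} (h0 : p 0) (h : ∀ i ∈ Finset.Icc 1 K, p i) :
    ∀ i ∈ Finset.Icc 1 K, p (i - 1) := by
  intro i hi
  obtain ⟨-, hiK⟩ := Finset.mem_Icc.1 hi
  rcases Nat.eq_zero_or_pos (i - 1) with hi0 | hi0
  · rwa [hi0]
  · exact h _ (Finset.mem_Icc.2 ⟨hi0, by omega⟩)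

theorem dynamic_regret_online_proximal_gradient_general
    {E : Type*} [NormedAddCommGroup E] [InnerProductSpace ℝ E]
    (X : Set E) (hXconv : Convex ℝ X)
    (R : ℝ) (hdiam : ∀ u ∈ X, ∀ v ∈ X, ‖u - v‖ ≤ R)
    (α L : ℝ) (hα : 0 < α) (hαL : α ≤ 1 / L)
    (K : ℕ)
    (s : ℕ → E → ℝ) (ds : ℕ → E → E)
    (hs_conv : ∀ i ∈ Finset.Icc 1 K, ConvexOn ℝ Set.univ (s i))
    (hs_diff : ∀ i ∈ Finset.Icc 1 K, ∀ u : E, HasFDerivAt (s i) (innerSL ℝ (ds i u)) u)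
    (hdesc : ∀ i ∈ Finset.Icc 1 K, ∀ u v : E,
      s i v ≤ s i u + ⟪ds i u, v - u⟫ + L / 2 * ‖v - u‖ ^ 2)
    (g : ℕ → E → ℝ) (hg_conv : ∀ i ∈ Finset.Icc 1 K, ConvexOn ℝ Set.univ (g i))
    (f : ℕ → E → ℝ) (hf : ∀ i, f i = fun z => s i z + g i z)
    (xstar : ℕ → E) (hxstar0 : xstar 0 ∈ X)
    (hxstar_mem : ∀ i ∈ Finset.Icc 1 K, xstar i ∈ X)
    (ω : ℕ → ℝ) (hω : ∀ i ∈ Finset.Icc 1 K, ω i = ‖xstar i - xstar (i - 1)‖)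
    (x : ℕ → E) (hx0 : x 0 ∈ X)
    (hx_mem : ∀ i ∈ Finset.Icc 1 K, x i ∈ X)
    (hx_min : ∀ i ∈ Finset.Icc 1 K,
      IsMinOn (fun z => g i z + 1 / (2 * α) * ‖z - (x (i - 1) - α • ds i (x (i - 1)))‖ ^ 2)
        X (x i)) :
    ∑ i ∈ Finset.Icc 1 K, (f i (x i) - f i (xstar i)) ≤
      1 / (2 * α) * ‖x 0 - xstar 0‖ ^ 2
        + R / α * ∑ i ∈ Finset.Icc 1 K, ω i
        + 1 / (2 * α) * ∑ i ∈ Finset.Icc 1 K, ω i ^ 2 := by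
  have hL : 0 < L := one_div_pos.mp (hα.trans_le hαL)
  have hLα : L ≤ 1 / α := (le_one_div hα hL).mp hαL
  set V : ℕ → ℝ := fun i => 1 / (2 * α) * ‖xstar i - x i‖ ^ 2 with hV
  have step : ∀ i ∈ Finset.Icc 1 K, f i (x i) - f i (xstar i) ≤
      (V (i - 1) - V i) + (R / α * ω i + 1 / (2 * α) * ω i ^ 2) := by
    intro i hi
    have hprox := proxGrad_step_le (hs_conv i hi) ((hg_conv i hi).subset (subset_univ X) hXconv)
      hα hLα (hs_diff i hi _) (hdesc i hi _ _) (hx_min i hi) (hx_mem i hi) (hxstar_mem i hi)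
    have hdrift := sq_norm_sub_le_of_norm_sub_le (a := xstar i)
      (hdiam _ (forall_Icc_pred hxstar0 hxstar_mem i hi) _ (forall_Icc_pred hx0 hx_mem i hi))
    rw [← hω i hi] at hdrift
    have hscaled := mul_le_mul_of_nonneg_left hdrift (by positivity : 0 ≤ 1 / (2 * α))
    have hRω : R / α * ω i = 1 / (2 * α) * (2 * R * ω i) := by field_simp
    simp only [hf, hV]
    linarith
  calc ∑ i ∈ Finset.Icc 1 K, (f i (x i) - f i (xstar i))
      ≤ ∑ i ∈ Finset.Icc 1 K, ((V (i - 1) - V i) + (R / α * ω i + 1 / (2 * α) * ω i ^ 2)) :=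
        Finset.sum_le_sum step
    _ = V 0 - V K + R / α * ∑ i ∈ Finset.Icc 1 K, ω i
          + 1 / (2 * α) * ∑ i ∈ Finset.Icc 1 K, ω i ^ 2 := by
        rw [Finset.sum_add_distrib, Finset.sum_Icc_one_sub_pred, Finset.sum_add_distrib,
          Finset.mul_sum, Finset.mul_sum, add_assoc]
    _ ≤ _ := by
        have hV0 : V 0 = 1 / (2 * α) * ‖x 0 - xstar 0‖ ^ 2 := by rw [hV, norm_sub_rev]
        have hVK : 0 ≤ V K := by positivity
        linarith

/-- Theorem 1 (explicit form): dynamic regret bound for the online proximal-gradient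
method on time-varying composite convex problems `f_i = s_i + g_i` over a convex set `X`
with diameter at most `R`. -/
theorem dynamic_regret_online_proximal_gradient
    {E : Type*} [NormedAddCommGroup E] [InnerProductSpace ℝ E]
    (X : Set E) (hXne : X.Nonempty) (hXconv : Convex ℝ X)
    (R : ℝ) (hR : 0 < R) (hdiam : ∀ u ∈ X, ∀ v ∈ X, ‖u - v‖ ≤ R)
    (α L : ℝ) (hα : 0 < α) (hL : 0 < L) (hαL : α ≤ 1 / L)
    (K : ℕ)
    (s : ℕ → E → ℝ) (ds : ℕ → E → E)
    (hs_conv : ∀ i ∈ Finset.Icc 1 K, ConvexOn ℝ Set.univ (s i))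
    (hs_diff : ∀ i ∈ Finset.Icc 1 K, ∀ u : E, HasFDerivAt (s i) (innerSL ℝ (ds i u)) u)
    (hdesc : ∀ i ∈ Finset.Icc 1 K, ∀ u v : E,
      s i v ≤ s i u + ⟪ds i u, v - u⟫ + L / 2 * ‖v - u‖ ^ 2)
    (g : ℕ → E → ℝ) (hg_conv : ∀ i ∈ Finset.Icc 1 K, ConvexOn ℝ Set.univ (g i))
    (f : ℕ → E → ℝ) (hf : ∀ i, f i = fun z => s i z + g i z)
    (xstar : ℕ → E) (hxstar0 : xstar 0 ∈ X)
    (hxstar_mem : ∀ i ∈ Finset.Icc 1 K, xstar i ∈ X)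
    (hxstar_min : ∀ i ∈ Finset.Icc 1 K, IsMinOn (f i) X (xstar i))
    (ω : ℕ → ℝ) (hω : ∀ i ∈ Finset.Icc 1 K, ω i = ‖xstar i - xstar (i - 1)‖)
    (x : ℕ → E) (hx0 : x 0 ∈ X)
    (hx_mem : ∀ i ∈ Finset.Icc 1 K, x i ∈ X)
    (hx_min : ∀ i ∈ Finset.Icc 1 K,
      IsMinOn (fun z => g i z + 1 / (2 * α) * ‖z - (x (i - 1) - α • ds i (x (i - 1)))‖ ^ 2)
        X (x i)) :
    ∑ i ∈ Finset.Icc 1 K, (f i (x i) - f i (xstar i)) ≤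
      1 / (2 * α) * ‖x 0 - xstar 0‖ ^ 2
        + R / α * ∑ i ∈ Finset.Icc 1 K, ω i
        + 1 / (2 * α) * ∑ i ∈ Finset.Icc 1 K, ω i ^ 2 :=
  dynamic_regret_online_proximal_gradient_general X hXconv R hdiam α L hα hαL K s ds hs_conv hs_diff
    hdesc g hg_conv f hf xstar hxstar0 hxstar_mem ω hω x hx0 hx_mem hx_min
end

section
/- Let E be a real inner product space, let X ⊆ E be a nonempty convex set, let α > 0 and L > 0 with α ≤ 1/L. For each i = 1, …, K let s_i : E → ℝ be a convex differentiable function whose gradient ∇s_i satisfies s_i(v) ≤ s_i(u) + ⟪∇s_i(u), v - u⟫ + (L/2)‖v - u‖² for all u, v ∈ E, let g_i : E → ℝ be convex, and set f_i := s_i + g_i. Suppose there is a single point x* ∈ X that minimizes every f_i over X (i.e., the optimizer is constant in time). Let x_0 ∈ X and, for each i, let x_i ∈ X minimize z ↦ g_i(z) + (1/(2α))‖z - (x_{i-1} - α∇s_i(x_{i-1}))‖² over X. Then ∑_{i=1}^K [f_i(x_i) - f_i(x*)] ≤ (1/(2α))‖x_0 - x*‖², and consequently (1/K)∑_{i=1}^K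 [f_i(x_i) - f_i(x*)] → 0 as K → ∞. -/
open scoped RealInnerProductSpace

/-!
Each proximal-gradient step obeys the one-step bound
`f_i(x_i) - f_i(z) ≤ (‖x_{i-1} - z‖² - ‖x_i - z‖²) / (2α)` for every `z ∈ X`. It comes from adding
three inequalities: the descent inequality for `s_i` at `x_{i-1}` (where `α ≤ 1/L` lets the
quadratic term be absorbed), the gradient inequality of the convex `s_i`, and the quadratic growth
of the `1/α`-strongly convex proximal objective away from its minimizer `x_i`. With `z = x*`
the bounds telescope, and since `x*` minimizes every `f_i` the regret sums are nonnegative,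
so their averages are squeezed to `0`.
-/

open Filter Topology

section InnerProductSpace

variable {E : Type*} [NormedAddCommGroup E] [InnerProductSpace ℝ E]

lemma ConvexOn.apply_sub_le_of_hasFDerivAt {S : Set E} {f : E → ℝ} {f' : E →L[ℝ] ℝ} {u v : E}
    (hf : ConvexOn ℝ S f) (hu : u ∈ S) (hv : v ∈ S) (hf' : HasFDerivAt f f' u) :
    f' (v - u) ≤ f v - f u := by
  have hline : HasDerivAt (f ∘ AffineMap.lineMap (k := ℝ) u v) (f' (v - u)) 0 := by
    refine HasFDerivAt.comp_hasDerivAt (0 : ℝ) ?_ AffineMap.hasDerivAt_lineMap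
    rwa [AffineMap.lineMap_apply_zero]
  have := (hf.comp_affineMap (AffineMap.lineMap u v)).le_slope_of_hasDerivAt
    (by simpa using hu) (by simpa using hv) zero_lt_one hline
  simpa [slope_def_field] using this

lemma strongConvexOn_mul_norm_sub_sq {S : Set E} (hS : Convex ℝ S) (c : ℝ) (y : E) :
    StrongConvexOn S (2 * c) fun w => c * ‖w - y‖ ^ 2 := by
  rw [strongConvexOn_iff_convex]
  have hsplit : (fun w : E => c * ‖w - y‖ ^ 2 - 2 * c / 2 * ‖w‖ ^ 2)
      = fun w => (-(2 * c) • innerSL ℝ y) w + c * ‖y‖ ^ 2 := by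
    ext w
    simp only [norm_sub_sq_real, FunLike.coe_smul, Pi.smul_apply, innerSL_apply_apply,
      real_inner_comm y, smul_eq_mul]
    ring
  rw [hsplit]
  exact ((-(2 * c) • innerSL ℝ y).toLinearMap.convexOn hS).add_const _

lemma StrongConvexOn.add_le_of_isMinOn {S : Set E} {h : E → ℝ} {m : ℝ} {xmin z : E}
    (hh : StrongConvexOn S m h) (hmin : IsMinOn h S xmin) (hxmin : xmin ∈ S) (hz : z ∈ S) :
    h xmin + m / 2 * ‖z - xmin‖ ^ 2 ≤ h z := by
  have hsegment : ∀ t ∈ Set.Ioo (0 : ℝ) 1, h xmin + (1 - t) * (m / 2 * ‖z - xmin‖ ^ 2) ≤ h z := by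
    rintro t ⟨ht0, ht1⟩
    have hmem : (1 - t) • xmin + t • z ∈ S := hh.1 hxmin hz (by linarith) ht0.le (by ring)
    have hconv := hh.2 hxmin hz (by linarith : 0 ≤ 1 - t) ht0.le (by ring)
    have hle := isMinOn_iff.mp hmin _ hmem
    rw [norm_sub_rev, smul_eq_mul, smul_eq_mul] at hconv
    refine le_of_mul_le_mul_left ?_ ht0
    linarith
  have hlim : Tendsto (fun t : ℝ => h xmin + (1 - t) * (m / 2 * ‖z - xmin‖ ^ 2)) (𝓝[>] 0)
      (𝓝 (h xmin + (1 - 0) * (m / 2 * ‖z - xmin‖ ^ 2))) :=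
    (Continuous.tendsto (by fun_prop) 0).mono_left nhdsWithin_le_nhds
  rw [sub_zero, one_mul] at hlim
  exact le_of_tendsto hlim (eventually_of_mem (Ioo_mem_nhdsGT zero_lt_one) hsegment)

lemma ConvexOn.prox_add_le_of_isMinOn {X : Set E} {g : E → ℝ} {c : ℝ} {y xmin z : E}
    (hg : ConvexOn ℝ X g) (hmin : IsMinOn (fun w => g w + c * ‖w - y‖ ^ 2) X xmin)
    (hxmin : xmin ∈ X) (hz : z ∈ X) :
    g xmin + c * ‖xmin - y‖ ^ 2 + c * ‖z - xmin‖ ^ 2 ≤ g z + c * ‖z - y‖ ^ 2 := by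
  have hstrong : StrongConvexOn X (2 * c) fun w => g w + c * ‖w - y‖ ^ 2 := by
    have := hg.uniformConvexOn_zero.add (strongConvexOn_mul_norm_sub_sq hg.1 c y)
    rwa [zero_add] at this
  have := hstrong.add_le_of_isMinOn hmin hxmin hz
  rwa [mul_div_cancel_left₀ c two_ne_zero] at this

lemma proximal_gradient_step_le {X : Set E} {α L : ℝ} (hα : 0 < α) (hαL : α ≤ 1 / L)
    {s g : E → ℝ} {d u xnext z : E} (hs : ConvexOn ℝ Set.univ s)
    (hs' : HasFDerivAt s (innerSL ℝ d) u)
    (hdesc : s xnext ≤ s u + ⟪d, xnext - u⟫ + L / 2 * ‖xnext - u‖ ^ 2)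
    (hg : ConvexOn ℝ X g)
    (hmin : IsMinOn (fun w => g w + 1 / (2 * α) * ‖w - (u - α • d)‖ ^ 2) X xnext)
    (hxnext : xnext ∈ X) (hz : z ∈ X) :
    s xnext + g xnext - (s z + g z) ≤
      1 / (2 * α) * ‖u - z‖ ^ 2 - 1 / (2 * α) * ‖xnext - z‖ ^ 2 := by
  set c := 1 / (2 * α)
  have hLc : L / 2 ≤ c := by
    rcases le_or_gt L 0 with hL | hL
    · have : 0 < c := by positivity
      linarith
    · have : L ≤ 1 / α := (le_one_div hα hL).mp hαL
      simp only [c, one_div, mul_inv] at this ⊢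
      linarith
  -- expanding the square turns the prox term into the linearization of `s` at `u`
  have hexpand : ∀ w,
      c * ‖w - (u - α • d)‖ ^ 2 = c * ‖w - u‖ ^ 2 + ⟪d, w - u⟫ + α / 2 * ‖d‖ ^ 2 := by
    intro w
    rw [show w - (u - α • d) = (w - u) + α • d by abel, norm_add_sq_real, norm_smul,
      real_inner_smul_right, real_inner_comm, Real.norm_of_nonneg hα.le]
    simp only [c]
    field_simp
  have hprox := hg.prox_add_le_of_isMinOn hmin hxnext hz
  have hgrad := hs.apply_sub_le_of_hasFDerivAt (Set.mem_univ u) (Set.mem_univ z) hs'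
  rw [innerSL_apply_apply] at hgrad
  have hdesc' : s xnext ≤ s u + ⟪d, xnext - u⟫ + c * ‖xnext - u‖ ^ 2 :=
    hdesc.trans (by gcongr)
  rw [hexpand, hexpand] at hprox
  rw [norm_sub_rev u z, norm_sub_rev xnext z]
  linarith

end InnerProductSpace

lemma Finset.sum_Icc_le_sub_of_le_sub {β : Type*} [AddCommGroup β] [PartialOrder β]
    [IsOrderedAddMonoid β] {a b : ℕ → β} (h : ∀ i, 1 ≤ i → a i ≤ b (i - 1) - b i) (K : ℕ) :
    ∑ i ∈ Finset.Icc 1 K, a i ≤ b 0 - b K := by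
  induction K with
  | zero => simp
  | succ K ih =>
    rw [Finset.sum_Icc_succ_top (Nat.le_add_left 1 K)]
    calc ∑ i ∈ Finset.Icc 1 K, a i + a (K + 1) ≤ (b 0 - b K) + (b K - b (K + 1)) :=
          add_le_add ih (h (K + 1) (Nat.le_add_left 1 K))
      _ = b 0 - b (K + 1) := sub_add_sub_cancel _ _ _

theorem no_regret_constant_optimizer_general
    {E : Type*} [NormedAddCommGroup E] [InnerProductSpace ℝ E]
    (X : Set E) (hXconv : Convex ℝ X)
    (α L : ℝ) (hα : 0 < α) (hαL : α ≤ 1 / L)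
    (s : ℕ → E → ℝ) (ds : ℕ → E → E)
    (hs_conv : ∀ i, 1 ≤ i → ConvexOn ℝ Set.univ (s i))
    (hs_diff : ∀ i, 1 ≤ i → ∀ u : E, HasFDerivAt (s i) (innerSL ℝ (ds i u)) u)
    (hdesc : ∀ i, 1 ≤ i → ∀ u v : E,
      s i v ≤ s i u + ⟪ds i u, v - u⟫ + L / 2 * ‖v - u‖ ^ 2)
    (g : ℕ → E → ℝ) (hg_conv : ∀ i, 1 ≤ i → ConvexOn ℝ Set.univ (g i))
    (f : ℕ → E → ℝ) (hf : ∀ i, f i = fun z => s i z + g i z)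
    (xstar : E) (hxstar_mem : xstar ∈ X)
    (hxstar_min : ∀ i, 1 ≤ i → IsMinOn (f i) X xstar)
    (x : ℕ → E)
    (hx_mem : ∀ i, 1 ≤ i → x i ∈ X)
    (hx_min : ∀ i, 1 ≤ i →
      IsMinOn (fun z => g i z + 1 / (2 * α) * ‖z - (x (i - 1) - α • ds i (x (i - 1)))‖ ^ 2)
        X (x i)) :
    (∀ K : ℕ, ∑ i ∈ Finset.Icc 1 K, (f i (x i) - f i xstar) ≤
      1 / (2 * α) * ‖x 0 - xstar‖ ^ 2) ∧
    Filter.Tendsto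
      (fun K : ℕ => (1 : ℝ) / K * ∑ i ∈ Finset.Icc 1 K, (f i (x i) - f i xstar))
      Filter.atTop (nhds 0) := by
  have hstep : ∀ i, 1 ≤ i → f i (x i) - f i xstar ≤
      1 / (2 * α) * ‖x (i - 1) - xstar‖ ^ 2 - 1 / (2 * α) * ‖x i - xstar‖ ^ 2 := fun i hi => by
    rw [hf i]
    exact proximal_gradient_step_le hα hαL (hs_conv i hi) (hs_diff i hi _) (hdesc i hi _ _)
      ((hg_conv i hi).subset (Set.subset_univ X) hXconv) (hx_min i hi) (hx_mem i hi) hxstar_mem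
  have hbound : ∀ K : ℕ, ∑ i ∈ Finset.Icc 1 K, (f i (x i) - f i xstar) ≤
      1 / (2 * α) * ‖x 0 - xstar‖ ^ 2 := fun K =>
    (Finset.sum_Icc_le_sub_of_le_sub
      (b := fun i => 1 / (2 * α) * ‖x i - xstar‖ ^ 2) hstep K).trans (sub_le_self _ (by positivity))
  have hnonneg : ∀ K : ℕ, 0 ≤ ∑ i ∈ Finset.Icc 1 K, (f i (x i) - f i xstar) := fun K =>
    Finset.sum_nonneg fun i hi => by
      obtain ⟨hi, -⟩ := Finset.mem_Icc.mp hi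
      exact sub_nonneg.mpr (isMinOn_iff.mp (hxstar_min i hi) _ (hx_mem i hi))
  refine ⟨hbound, (tendsto_one_div_atTop_nhds_zero_nat (𝕜 := ℝ)).zero_mul_isBoundedUnder_le
    ⟨1 / (2 * α) * ‖x 0 - xstar‖ ^ 2, eventually_map.2 (Eventually.of_forall fun K => ?_)⟩⟩
  rw [Function.comp_apply, Real.norm_of_nonneg (hnonneg K)]
  exact hbound K

/-- Remark after Theorem 1: if a single point `x*` minimizes every `f_i = s_i + g_i`
over `X` (the optimizer is constant in time), then the regret of the online
proximal-gradient method is bounded by `(1/(2α))‖x_0 - x*‖²`, and consequently the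
time-averaged regret tends to `0` as `K → ∞`. -/
theorem no_regret_constant_optimizer
    {E : Type*} [NormedAddCommGroup E] [InnerProductSpace ℝ E]
    (X : Set E) (hXne : X.Nonempty) (hXconv : Convex ℝ X)
    (α L : ℝ) (hα : 0 < α) (hL : 0 < L) (hαL : α ≤ 1 / L)
    (s : ℕ → E → ℝ) (ds : ℕ → E → E)
    (hs_conv : ∀ i, 1 ≤ i → ConvexOn ℝ Set.univ (s i))
    (hs_diff : ∀ i, 1 ≤ i → ∀ u : E, HasFDerivAt (s i) (innerSL ℝ (ds i u)) u)
    (hdesc : ∀ i, 1 ≤ i → ∀ u v : E,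
      s i v ≤ s i u + ⟪ds i u, v - u⟫ + L / 2 * ‖v - u‖ ^ 2)
    (g : ℕ → E → ℝ) (hg_conv : ∀ i, 1 ≤ i → ConvexOn ℝ Set.univ (g i))
    (f : ℕ → E → ℝ) (hf : ∀ i, f i = fun z => s i z + g i z)
    (xstar : E) (hxstar_mem : xstar ∈ X)
    (hxstar_min : ∀ i, 1 ≤ i → IsMinOn (f i) X xstar)
    (x : ℕ → E) (hx0 : x 0 ∈ X)
    (hx_mem : ∀ i, 1 ≤ i → x i ∈ X)
    (hx_min : ∀ i, 1 ≤ i →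
      IsMinOn (fun z => g i z + 1 / (2 * α) * ‖z - (x (i - 1) - α • ds i (x (i - 1)))‖ ^ 2)
        X (x i)) :
    (∀ K : ℕ, ∑ i ∈ Finset.Icc 1 K, (f i (x i) - f i xstar) ≤
      1 / (2 * α) * ‖x 0 - xstar‖ ^ 2) ∧
    Filter.Tendsto
      (fun K : ℕ => (1 : ℝ) / K * ∑ i ∈ Finset.Icc 1 K, (f i (x i) - f i xstar))
      Filter.atTop (nhds 0) :=
  no_regret_constant_optimizer_general X hXconv α L hα hαL s ds hs_conv hs_diff hdesc g hg_conv f hf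
    xstar hxstar_mem hxstar_min x hx_mem hx_min
end

section
/- Let E be a real inner product space, let X ⊆ E be a nonempty convex set, let α > 0 and L > 0 with α ≤ 1/L. Let s : E → ℝ be a convex differentiable function whose gradient ∇s satisfies s(v) ≤ s(u) + ⟪∇s(u), v - u⟫ + (L/2)‖v - u‖² for all u, v ∈ E, and let g : E → ℝ be convex. Let x ∈ X, set y := x - α∇s(x), and let x⁺ ∈ X be a minimizer over X of the map z ↦ g(z) + (1/(2α))‖z - y‖². Then for every z ∈ X, (s + g)(x⁺) - (s + g)(z) ≤ (1/(2α))(‖x - z‖² - ‖x⁺ - z‖²). -/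
/-!
The prox objective `z ↦ g z + ‖z - y‖² / (2α)` is `1/α`-strongly convex, so its minimiser `x⁺`
over the convex set `X` satisfies the quadratic growth bound
`g x⁺ + ‖x⁺ - y‖² / (2α) + ‖x⁺ - z‖² / (2α) ≤ g z + ‖z - y‖² / (2α)`.
Since `y = x - α ∇s(x)`, the term `‖w - y‖² / (2α)` is, up to a constant, the linearisation
`⟪∇s(x), w - x⟫ + ‖w - x‖² / (2α)` of `s` at `x`. The descent inequality (with `L ≤ 1/α`) bounds
`s x⁺` by this model at `w = x⁺`, and the gradient inequality of the convex `s` bounds the model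
at `w = z` by `s z + ‖z - x‖² / (2α)`.
-/

open scoped RealInnerProductSpace
open Filter Topology

section NormedSpace

variable {E : Type*} [NormedAddCommGroup E] [NormedSpace ℝ E] {s : Set E} {f : E → ℝ}

theorem ConvexOn.apply_sub_le_sub_of_hasFDerivAt {f' : E →L[ℝ] ℝ} {x y : E}
    (hf : ConvexOn ℝ s f) (hx : x ∈ s) (hy : y ∈ s) (hf' : HasFDerivAt f f' x) :
    f' (y - x) ≤ f y - f x := by
  have hline : ConvexOn ℝ (AffineMap.lineMap (k := ℝ) x y ⁻¹' s)
      (f ∘ AffineMap.lineMap (k := ℝ) x y) :=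
    hf.comp_affineMap _
  have hderiv : HasDerivAt (f ∘ AffineMap.lineMap (k := ℝ) x y) (f' (y - x)) 0 :=
    (show HasFDerivAt f f' (AffineMap.lineMap x y (0 : ℝ)) by simpa using hf').comp_hasDerivAt 0
      AffineMap.hasDerivAt_lineMap
  simpa [slope_def_field] using
    hline.le_slope_of_hasDerivAt (x := 0) (y := 1) (by simpa using hx) (by simpa using hy)
      one_pos hderiv

theorem StrongConvexOn.add_sq_norm_sub_le_of_isMinOn {m : ℝ} {a z : E}
    (hf : StrongConvexOn s m f) (hmin : IsMinOn f s a) (ha : a ∈ s) (hz : z ∈ s) :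
    f a + m / 2 * ‖a - z‖ ^ 2 ≤ f z := by
  have hsegment : ∀ t ∈ Set.Ioc (0 : ℝ) 1, f a + (1 - t) * (m / 2 * ‖a - z‖ ^ 2) ≤ f z := by
    rintro t ⟨ht₀, ht₁⟩
    have hconv := hf.2 ha hz (sub_nonneg.2 ht₁) ht₀.le (sub_add_cancel 1 t)
    have hle := hmin (hf.1 ha hz (sub_nonneg.2 ht₁) ht₀.le (sub_add_cancel 1 t))
    simp only [Set.mem_ofPred_eq, smul_eq_mul] at hconv hle
    nlinarith
  have hlim : Tendsto (fun t : ℝ => f a + (1 - t) * (m / 2 * ‖a - z‖ ^ 2)) (𝓝[>] 0)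
      (𝓝 (f a + (1 - 0) * (m / 2 * ‖a - z‖ ^ 2))) :=
    ((Continuous.tendsto (by fun_prop) 0).mono_left nhdsWithin_le_nhds)
  simpa using le_of_tendsto hlim (eventually_of_mem (Ioc_mem_nhdsGT one_pos) hsegment)

end NormedSpace

section InnerProductSpace

variable {E : Type*} [NormedAddCommGroup E] [InnerProductSpace ℝ E] {s : Set E} {g : E → ℝ}

theorem ConvexOn.strongConvexOn_add_mul_sq_norm_sub (hg : ConvexOn ℝ s g) (c : ℝ) (y : E) :
    StrongConvexOn s (2 * c) (fun z => g z + c * ‖z - y‖ ^ 2) := by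
  rw [strongConvexOn_iff_convex]
  have haffine : (fun z => g z + c * ‖z - y‖ ^ 2 - 2 * c / 2 * ‖z‖ ^ 2) =
      fun z => g z + (innerSL ℝ (-(2 * c) • y)) z + c * ‖y‖ ^ 2 := by
    ext z
    rw [innerSL_apply_apply, real_inner_smul_left, norm_sub_sq_real, real_inner_comm]
    ring
  rw [haffine]
  exact (hg.add ((innerSL ℝ _).toLinearMap.convexOn hg.1)).add_const _

end InnerProductSpace

theorem proximal_gradient_step_inequality_general
    {E : Type*} [NormedAddCommGroup E] [InnerProductSpace ℝ E]
    (X : Set E) (hXconv : Convex ℝ X)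
    (α L : ℝ) (hα : 0 < α) (hL : 0 < L) (hαL : α ≤ 1 / L)
    (s : E → ℝ) (ds : E → E)
    (hs_conv : ConvexOn ℝ Set.univ s)
    (hs_diff : ∀ u : E, HasFDerivAt s (innerSL ℝ (ds u)) u)
    (hdesc : ∀ u v : E, s v ≤ s u + ⟪ds u, v - u⟫ + L / 2 * ‖v - u‖ ^ 2)
    (g : E → ℝ) (hg_conv : ConvexOn ℝ Set.univ g)
    (x : E) (y : E) (hy : y = x - α • ds x)
    (xp : E) (hxp : xp ∈ X)
    (hxp_min : IsMinOn (fun z => g z + 1 / (2 * α) * ‖z - y‖ ^ 2) X xp) :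
    ∀ z ∈ X, (s xp + g xp) - (s z + g z) ≤
      1 / (2 * α) * (‖x - z‖ ^ 2 - ‖xp - z‖ ^ 2) := by
  intro z hz
  have hgrad : ⟪ds x, z - x⟫ ≤ s z - s x := by
    simpa using hs_conv.apply_sub_le_sub_of_hasFDerivAt trivial trivial (hs_diff x)
  have hgrowth := ((hg_conv.subset (Set.subset_univ X) hXconv).strongConvexOn_add_mul_sq_norm_sub
    (1 / (2 * α)) y).add_sq_norm_sub_le_of_isMinOn hxp_min hxp hz
  have hLα : L / 2 ≤ 1 / (2 * α) := by
    rw [show 1 / (2 * α) = 1 / α / 2 by ring]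
    linarith [(le_one_div hα hL).1 hαL]
  have hcentre : ∀ w, 1 / (2 * α) * ‖w - y‖ ^ 2 =
      1 / (2 * α) * ‖w - x‖ ^ 2 + ⟪ds x, w - x⟫ + α / 2 * ‖ds x‖ ^ 2 := by
    intro w
    rw [hy, show w - (x - α • ds x) = (w - x) + α • ds x by abel, norm_add_sq_real,
      real_inner_smul_right, norm_smul, Real.norm_of_nonneg hα.le, real_inner_comm]
    field_simp
  have hdescent : s xp ≤ s x + ⟪ds x, xp - x⟫ + 1 / (2 * α) * ‖xp - x‖ ^ 2 :=
    (hdesc x xp).trans (add_le_add_right (mul_le_mul_of_nonneg_right hLα (sq_nonneg _)) _)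
  rw [norm_sub_rev x z]
  linarith [hcentre xp, hcentre z]

/-- Per-iteration inequality for one constrained proximal-gradient step on a composite
convex function `f = s + g`: for every comparator `z ∈ X`,
`(s + g)(x⁺) - (s + g)(z) ≤ (1/(2α))(‖x - z‖² - ‖x⁺ - z‖²)`. -/
theorem proximal_gradient_step_inequality
    {E : Type*} [NormedAddCommGroup E] [InnerProductSpace ℝ E]
    (X : Set E) (hXne : X.Nonempty) (hXconv : Convex ℝ X)
    (α L : ℝ) (hα : 0 < α) (hL : 0 < L) (hαL : α ≤ 1 / L)
    (s : E → ℝ) (ds : E → E)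
    (hs_conv : ConvexOn ℝ Set.univ s)
    (hs_diff : ∀ u : E, HasFDerivAt s (innerSL ℝ (ds u)) u)
    (hdesc : ∀ u v : E, s v ≤ s u + ⟪ds u, v - u⟫ + L / 2 * ‖v - u‖ ^ 2)
    (g : E → ℝ) (hg_conv : ConvexOn ℝ Set.univ g)
    (x : E) (hx : x ∈ X) (y : E) (hy : y = x - α • ds x)
    (xp : E) (hxp : xp ∈ X)
    (hxp_min : IsMinOn (fun z => g z + 1 / (2 * α) * ‖z - y‖ ^ 2) X xp) :
    ∀ z ∈ X, (s xp + g xp) - (s z + g z) ≤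
      1 / (2 * α) * (‖x - z‖ ^ 2 - ‖xp - z‖ ^ 2) :=
  proximal_gradient_step_inequality_general X hXconv α L hα hL hαL s ds hs_conv hs_diff hdesc g
    hg_conv x y hy xp hxp hxp_min
end

section
/- Let γ > 0, y ∈ ℝ, and a ≤ b be real numbers with a ≤ 0 ≤ b. The function x ↦ γ|x| + (1/2)(x - y)² restricted to the interval [a, b] has a unique minimizer, given by clamping the soft-threshold of y to the interval: x̂ = max(min(S_γ(y), b), a), where S_γ(y) = sgn(y) · max(|y| - γ, 0). -/
lemma key_ineq (γ y a b z : ℝ) (hγ : 0 < γ) (hab : a ≤ b) (ha : a ≤ 0) (hb : 0 ≤ b)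
    (hza : a ≤ z) (hzb : z ≤ b) :
    γ * |max (min (Real.sign y * max (|y| - γ) 0) b) a| +
      (max (min (Real.sign y * max (|y| - γ) 0) b) a - y) *
      (max (min (Real.sign y * max (|y| - γ) 0) b) a - z) ≤ γ * |z| := by
  have hz1 := le_abs_self z
  have hz2 := neg_abs_le z
  have hzn := abs_nonneg z
  set s := Real.sign y * max (|y| - γ) 0 with hs
  have hscases : (s = 0 ∧ |y| ≤ γ) ∨ (s = y - γ ∧ γ < y) ∨ (s = y + γ ∧ y < -γ) := by
    rcases lt_trichotomy y 0 with hy | hy | hy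
    · rw [hs, Real.sign_of_neg hy]
      rcases lt_or_ge 0 (|y| - γ) with h | h
      · right; right
        rw [abs_of_neg hy] at h ⊢
        constructor
        · rw [max_eq_left h.le]; ring
        · linarith
      · left
        constructor
        · rw [max_eq_right h]; ring
        · linarith
    · left; constructor
      · simp [hs, hy]
      · simp [hy]; linarith
    · rw [hs, Real.sign_of_pos hy]
      rcases lt_or_ge 0 (|y| - γ) with h | h
      · right; left
        rw [abs_of_pos hy] at h ⊢
        constructor
        · rw [max_eq_left h.le]; ring
        · linarith
      · left
        constructor
        · rw [max_eq_right h]; ring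
        · linarith
  clear_value s
  rcases le_total b s with hsb | hsb
  · rw [min_eq_right hsb, max_eq_left hab, abs_of_nonneg hb]
    rcases hscases with ⟨hsv, hy⟩ | ⟨hsv, hy⟩ | ⟨hsv, hy⟩
    · obtain ⟨hy1, hy2⟩ := abs_le.mp hy
      have hb0 : b = 0 := le_antisymm (by linarith) hb
      subst hb0
      nlinarith [mul_nonneg (by linarith : (0:ℝ) ≤ γ - y) (by linarith : (0:ℝ) ≤ |z| + z),
        mul_nonneg (by linarith : (0:ℝ) ≤ γ + y) (by linarith : (0:ℝ) ≤ |z| - z)]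
    · nlinarith [mul_nonneg (by linarith : (0:ℝ) ≤ y - γ - b) (sub_nonneg.mpr hzb),
        mul_nonneg hγ.le (sub_nonneg.mpr hz1)]
    · linarith
  · rw [min_eq_left hsb]
    rcases le_total s a with hsa | hsa
    · rw [max_eq_right hsa, abs_of_nonpos ha]
      rcases hscases with ⟨hsv, hy⟩ | ⟨hsv, hy⟩ | ⟨hsv, hy⟩
      · obtain ⟨hy1, hy2⟩ := abs_le.mp hy
        have ha0 : a = 0 := le_antisymm ha (by linarith)
        subst ha0
        nlinarith [mul_nonneg (by linarith : (0:ℝ) ≤ γ - y) (by linarith : (0:ℝ) ≤ |z| + z),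
          mul_nonneg (by linarith : (0:ℝ) ≤ γ + y) (by linarith : (0:ℝ) ≤ |z| - z)]
      · linarith
      · nlinarith [mul_nonneg (by linarith : (0:ℝ) ≤ a - y - γ) (sub_nonneg.mpr hza),
          mul_nonneg hγ.le (by linarith : (0:ℝ) ≤ |z| + z)]
    · rw [max_eq_left hsa]
      rcases hscases with ⟨hsv, hy⟩ | ⟨hsv, hy⟩ | ⟨hsv, hy⟩
      · obtain ⟨hy1, hy2⟩ := abs_le.mp hy
        rw [hsv, abs_zero]
        nlinarith [mul_nonneg (by linarith : (0:ℝ) ≤ γ - y) (by linarith : (0:ℝ) ≤ |z| + z),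
          mul_nonneg (by linarith : (0:ℝ) ≤ γ + y) (by linarith : (0:ℝ) ≤ |z| - z)]
      · rw [hsv, abs_of_nonneg (by linarith : (0:ℝ) ≤ y - γ)]
        nlinarith [mul_nonneg hγ.le (sub_nonneg.mpr hz1)]
      · rw [hsv, abs_of_nonpos (by linarith : y + γ ≤ 0)]
        nlinarith [mul_nonneg hγ.le (by linarith : (0:ℝ) ≤ |z| + z)]

/-- Scalar form of update (16): the proximal operator of `γ|·|` plus the indicator of the
box `[a, b]` (with `a ≤ 0 ≤ b`) is soft-thresholding followed by clamping onto the box: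
the unique minimizer of `x ↦ γ|x| + (1/2)(x - y)²` over `[a, b]` is
`max(min(S_γ(y), b), a)` with `S_γ(y) = sgn(y)·max(|y| - γ, 0)`. -/
theorem prox_l1_box_soft_thresholding_clamped
    (γ y a b : ℝ) (hγ : 0 < γ) (hab : a ≤ b) (ha : a ≤ 0) (hb : 0 ≤ b) :
    ∃ xhat : ℝ,
      xhat = max (min (Real.sign y * max (|y| - γ) 0) b) a ∧
      xhat ∈ Set.Icc a b ∧
      (∀ z ∈ Set.Icc a b,
        γ * |xhat| + 1 / 2 * (xhat - y) ^ 2 ≤ γ * |z| + 1 / 2 * (z - y) ^ 2) ∧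
      (∀ z ∈ Set.Icc a b,
        (∀ w ∈ Set.Icc a b,
          γ * |z| + 1 / 2 * (z - y) ^ 2 ≤ γ * |w| + 1 / 2 * (w - y) ^ 2) →
        z = xhat) := by
  set X := max (min (Real.sign y * max (|y| - γ) 0) b) a with hX
  have hXmem : X ∈ Set.Icc a b := by
    constructor
    · exact le_max_right _ _
    · exact max_le (le_trans (min_le_right _ _) le_rfl) hab
  refine ⟨X, rfl, hXmem, ?_, ?_⟩
  · intro z hz
    have hk := key_ineq γ y a b z hγ hab ha hb hz.1 hz.2
    nlinarith [sq_nonneg (z - X)]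
  · intro z hz hmin
    have hk := key_ineq γ y a b z hγ hab ha hb hz.1 hz.2
    have h2 := hmin X hXmem
    have : (z - X) ^ 2 ≤ 0 := by nlinarith
    have := sq_eq_zero_iff.mp (le_antisymm this (sq_nonneg _))
    linarith [sub_eq_zero.mp this]
end
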